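/- An odd positive integer k is the cardinality of the group of units of some commutative ring if and only if k is of the form ∏_{i=1}^t (2^{n_i} − 1) for some positive integers n₁, …, n_t. -/

import Mathlib

/-!
If `|Rˣ|` is odd, then `-1` is a unit whose square is `1`, so `-1 = 1` and `R` has
characteristic `2`; likewise `1 + x` for `x² = 0`, so `R` is reduced. The units of `R` span a
finite `𝔽₂`-subalgebra (the image of `𝔽₂[Rˣ]`) with the same unit group, and a finite reduced
ring is a finite product of finite fields of characteristic `2`, whose unit groups have orders
`2ⁿ - 1`. Conversely `∏ i, 𝔽_{2^{nᵢ}}` has `∏ i, (2^{nᵢ} - 1)` units.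
-/

theorem eq_one_of_sq_eq_one_of_odd_card {G : Type*} [Group G] (hG : Odd (Nat.card G)) {g : G}
    (hg : g ^ 2 = 1) : g = 1 :=
  (powCoprime (Nat.coprime_two_right.2 hG)).injective (by simp [hg])

theorem Nat.card_units_pi {ι : Type*} [Fintype ι] (M : ι → Type*) [∀ i, Monoid (M i)] :
    Nat.card (∀ i, M i)ˣ = ∏ i, Nat.card (M i)ˣ := by
  rw [Nat.card_congr MulEquiv.piUnits.toEquiv, Nat.card_pi]

theorem Submonoid.card_units_eq_of_forall_units_mem {M : Type*} [Monoid M] (S : Submonoid M)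
    (hS : ∀ u : Mˣ, (u : M) ∈ S) : Nat.card Sˣ = Nat.card Mˣ := by
  have hunits : S.units = ⊤ :=
    eq_top_iff.2 fun u _ => S.mem_units_of_val_mem_inv_val_mem (hS u) (hS u⁻¹)
  rw [← Nat.card_congr S.unitsEquivUnitsType.toEquiv, hunits, Subgroup.card_top]

section OddUnits

variable {R : Type*}

theorem two_eq_zero_of_odd_card_units [Ring R] (h : Odd (Nat.card Rˣ)) : (2 : R) = 0 := by
  have hneg := congrArg Units.val (eq_one_of_sq_eq_one_of_odd_card h (g := -1) (by simp))
  rw [Units.val_neg, Units.val_one] at hneg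
  calc (2 : R) = 1 - -1 := by norm_num
    _ = 0 := by rw [hneg, sub_self]

theorem charP_two_of_odd_card_units [Ring R] [Nontrivial R] (h : Odd (Nat.card Rˣ)) :
    CharP R 2 :=
  (CharP.charP_iff_prime_eq_zero Nat.prime_two).2 <| by
    exact_mod_cast two_eq_zero_of_odd_card_units h

theorem isReduced_of_odd_card_units [CommRing R] (h : Odd (Nat.card Rˣ)) : IsReduced R := by
  refine (isReduced_iff_pow_one_lt 2 one_lt_two).2 fun x hx => ?_
  obtain ⟨u, hu⟩ := IsNilpotent.isUnit_one_add ⟨2, hx⟩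
  have hu2 : u ^ 2 = 1 := Units.ext <| by
    push_cast [hu]
    linear_combination x * two_eq_zero_of_odd_card_units h + hx
  have hu1 := congrArg Units.val (eq_one_of_sq_eq_one_of_odd_card h hu2)
  rw [hu, Units.val_one] at hu1
  linear_combination hu1

theorem FiniteField.exists_card_units_eq_two_pow_sub_one (K : Type*) [Field K] [Finite K]
    (h : Odd (Nat.card Kˣ)) : ∃ n, 0 < n ∧ Nat.card Kˣ = 2 ^ n - 1 := by
  have := charP_two_of_odd_card_units h
  have := Fintype.ofFinite K
  obtain ⟨n, -, hn⟩ := FiniteField.card K 2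
  exact ⟨n, n.pos, by rw [Nat.card_units, Nat.card_eq_fintype_card, hn]⟩

theorem exists_finite_subring_forall_units_mem [Ring R] (p : ℕ) [NeZero p] [CharP R p]
    [Finite Rˣ] : ∃ S : Subring R, Finite S ∧ ∀ u : Rˣ, (u : R) ∈ S := by
  let := ZMod.algebra R p
  let f := MonoidAlgebra.lift (ZMod p) R Rˣ (Units.coeHom R)
  have : Finite (MonoidAlgebra (ZMod p) Rˣ) := Module.finite_of_finite (ZMod p)
  exact ⟨f.toRingHom.range, Set.finite_range f |>.to_subtype,
    fun u => ⟨MonoidAlgebra.of (ZMod p) Rˣ u, by simp [f]⟩⟩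

theorem exists_finite_subring_card_units_eq_of_odd [Ring R] (h : Odd (Nat.card Rˣ)) :
    ∃ S : Subring R, Finite S ∧ Nat.card Sˣ = Nat.card Rˣ := by
  rcases subsingleton_or_nontrivial R with _ | _
  · exact ⟨⊤, Finite.of_subsingleton,
      Submonoid.card_units_eq_of_forall_units_mem (⊤ : Subring R).toSubmonoid fun _ => trivial⟩
  have := charP_two_of_odd_card_units h
  have : Finite Rˣ := Nat.finite_of_card_ne_zero h.pos.ne'
  obtain ⟨S, hSfin, hS⟩ := exists_finite_subring_forall_units_mem (R := R) 2
  exact ⟨S, hSfin, S.toSubmonoid.card_units_eq_of_forall_units_mem hS⟩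

theorem exists_card_units_eq_prod_two_pow_sub_one_of_odd [CommRing R] [Finite R]
    (h : Odd (Nat.card Rˣ)) :
    ∃ (t : ℕ) (n : Fin t → ℕ), (∀ i, 0 < n i) ∧ Nat.card Rˣ = ∏ i, (2 ^ n i - 1) := by
  have := isReduced_of_odd_card_units h
  have := Fintype.ofFinite (MaximalSpectrum R)
  have hcard : Nat.card Rˣ = ∏ I : MaximalSpectrum R, Nat.card (R ⧸ I.asIdeal)ˣ := by
    rw [Nat.card_congr (Units.mapEquiv (IsArtinianRing.equivPi R).toMulEquiv).toEquiv,
      Nat.card_units_pi]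
  have hfactor (I : MaximalSpectrum R) : ∃ n, 0 < n ∧ Nat.card (R ⧸ I.asIdeal)ˣ = 2 ^ n - 1 :=
    let := Ideal.Quotient.field I.asIdeal
    have := Finite.of_surjective _ (Ideal.Quotient.mk_surjective (I := I.asIdeal))
    FiniteField.exists_card_units_eq_two_pow_sub_one _ <|
      h.of_dvd_nat (hcard ▸ Finset.dvd_prod_of_mem _ (Finset.mem_univ I))
  choose n hn hcardn using hfactor
  let e := Fintype.equivFin (MaximalSpectrum R)
  refine ⟨_, n ∘ e.symm, fun i => hn _, ?_⟩
  rw [hcard, ← e.symm.prod_comp]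
  simp [hcardn]

end OddUnits

theorem odd_card_units_iff_general
    (k : ℕ) (hodd : Odd k) :
    (∃ (R : Type) (_ : CommRing R), Nat.card Rˣ = k) ↔
      (∃ (t : ℕ) (n : Fin t → ℕ), (∀ i, 0 < n i) ∧
        k = ∏ i, (2 ^ n i - 1)) := by
  constructor
  · rintro ⟨R, _, rfl⟩
    obtain ⟨S, _, hS⟩ := exists_finite_subring_card_units_eq_of_odd hodd
    rw [← hS] at hodd ⊢
    exact exists_card_units_eq_prod_two_pow_sub_one_of_odd hodd
  · rintro ⟨t, n, hn, rfl⟩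
    have : Fact (Nat.Prime 2) := ⟨Nat.prime_two⟩
    refine ⟨∀ i, GaloisField 2 (n i), inferInstance, ?_⟩
    rw [Nat.card_units_pi]
    refine Finset.prod_congr rfl fun i _ => ?_
    rw [Nat.card_units, GaloisField.card 2 (n i) (hn i).ne']

/-- An odd positive integer `k` is the number of units of some commutative ring
if and only if `k = ∏ i, (2 ^ nᵢ - 1)` for some positive integers `n₁, …, n_t`. -/
theorem odd_card_units_iff
    (k : ℕ) (hk : 0 < k) (hodd : Odd k) :
    (∃ (R : Type) (_ : CommRing R), Nat.card Rˣ = k) ↔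
      (∃ (t : ℕ) (n : Fin t → ℕ), (∀ i, 0 < n i) ∧
        k = ∏ i, (2 ^ n i - 1)) :=
  odd_card_units_iff_general k hodd
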